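/- For every integer N ≥ 1, (1/16)·(1 − N(4^{1/N}+1)/(4^{1/N}−1) + N(4^{3/N}+4^{−2/N})/(4^{1/N}−1))^2 = (2 + (N/4)·g(N))^2 > 4, where g(N) = (4^{2/N} − 4^{−2/N}) + (4^{1/N} − 4^{−1/N}) − 7/N. -/
import Mathlib


open Real

/-- `g(N) = (4^{2/N} − 4^{−2/N}) + (4^{1/N} − 4^{−1/N}) − 7/N`. -/
noncomputable def gSeq (N : ℝ) : ℝ :=
  ((4:ℝ) ^ (2/N) - (4:ℝ) ^ (-2/N)) + ((4:ℝ) ^ (1/N) - (4:ℝ) ^ (-1/N)) - 7/N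

lemma sinh_ge (u : ℝ) (hu : 0 ≤ u) : 2 * u ≤ Real.exp u - Real.exp (-u) := by
  have hp : 1 + u + u ^ 2 / 2 + u ^ 3 / 6 ≤ Real.exp u := by
    have h := Real.sum_le_exp_of_nonneg hu 4
    simp [Finset.sum_range_succ, Nat.factorial] at h
    nlinarith [h]
  have ha0 : 0 < Real.exp u := Real.exp_pos u
  rw [Real.exp_neg, ← sub_nonneg]
  have key : Real.exp u - (Real.exp u)⁻¹ - 2 * u
      = (Real.exp u ^ 2 - 2 * u * Real.exp u - 1) / Real.exp u := by
    field_simp; ring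
  rw [key]
  apply div_nonneg _ (le_of_lt ha0)
  have hprod : 0 ≤ (Real.exp u - (1 + u + u ^ 2 / 2 + u ^ 3 / 6))
      * (Real.exp u + (1 + u + u ^ 2 / 2 + u ^ 3 / 6) - 2 * u) := by
    apply mul_nonneg (by linarith)
    nlinarith [sq_nonneg (u - 1), pow_nonneg hu 3]
  nlinarith [hprod, pow_nonneg hu 3, pow_nonneg hu 4, pow_nonneg hu 5, pow_nonneg hu 6]

theorem stmt_17 (N : ℕ) (hN : 1 ≤ N) :
    (1/16) * (1 - N * ((4:ℝ) ^ (1/(N:ℝ)) + 1) / ((4:ℝ) ^ (1/(N:ℝ)) - 1)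
        + N * ((4:ℝ) ^ (3/(N:ℝ)) + (4:ℝ) ^ (-2/(N:ℝ))) / ((4:ℝ) ^ (1/(N:ℝ)) - 1))^2
      = (2 + (N/4) * gSeq N)^2 ∧
    4 < (2 + (N/4) * gSeq N)^2 := by
  have hN0 : (0:ℝ) < N := by exact_mod_cast hN
  set a : ℝ := (4:ℝ) ^ (1/(N:ℝ)) with ha_def
  have ha1 : 1 < a := by
    rw [ha_def]
    exact (Real.one_lt_rpow_iff_of_pos (by norm_num)).mpr (Or.inl ⟨by norm_num, by positivity⟩)
  have ha0 : 0 < a := lt_trans one_pos ha1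
  have h2 : (4:ℝ) ^ (2/(N:ℝ)) = a ^ 2 := by
    rw [ha_def, ← Real.rpow_natCast ((4:ℝ) ^ (1/(N:ℝ))) 2, ← Real.rpow_mul (by norm_num)]
    norm_num; ring_nf
  have h3 : (4:ℝ) ^ (3/(N:ℝ)) = a ^ 3 := by
    rw [ha_def, ← Real.rpow_natCast ((4:ℝ) ^ (1/(N:ℝ))) 3, ← Real.rpow_mul (by norm_num)]
    norm_num; ring_nf
  have hm1 : (4:ℝ) ^ (-1/(N:ℝ)) = a⁻¹ := by
    rw [ha_def, ← Real.rpow_neg (by norm_num)]; ring_nf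
  have hm2 : (4:ℝ) ^ (-2/(N:ℝ)) = (a ^ 2)⁻¹ := by
    rw [← h2, ← Real.rpow_neg (by norm_num)]; ring_nf
  have hg : gSeq N = (a ^ 2 - (a ^ 2)⁻¹) + (a - a⁻¹) - 7 / N := by
    rw [gSeq, h2, hm2, hm1]
  have hane : a - 1 ≠ 0 := by linarith
  have haNe : a ≠ 0 := ne_of_gt ha0
  have hNe : (N:ℝ) ≠ 0 := ne_of_gt hN0
  constructor
  · rw [hg, h3, hm2]
    field_simp
    ring
  · -- inequality: show (N/4) * gSeq N > 0
    set u : ℝ := Real.log 4 * (1 / N) with hu_def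
    have hlog4 : 0 < Real.log 4 := Real.log_pos (by norm_num)
    have hu0 : 0 ≤ u := by positivity
    have hae : a = Real.exp u := by
      rw [ha_def, Real.rpow_def_of_pos (by norm_num), hu_def]
    have hs1 : 2 * u ≤ a - a⁻¹ := by
      rw [hae, ← Real.exp_neg]; exact sinh_ge u hu0
    have hs2 : 2 * (2 * u) ≤ a ^ 2 - (a ^ 2)⁻¹ := by
      have := sinh_ge (2 * u) (by linarith)
      have e1 : Real.exp (2 * u) = a ^ 2 := by
        rw [hae, sq, ← Real.exp_add]; ring_nf
      have e2 : Real.exp (-(2 * u)) = (a ^ 2)⁻¹ := by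
        rw [Real.exp_neg, e1]
      rw [e1, e2] at this; linarith
    have hlog2 : Real.log 2 > 0.6931471803 := Real.log_two_gt_d9
    have hlog4' : Real.log 4 = 2 * Real.log 2 := by
      rw [show (4:ℝ) = 2 ^ 2 by norm_num, Real.log_pow]; push_cast; ring
    have h6u : 6 * u > 7 / N := by
      rw [hu_def, hlog4']
      rw [gt_iff_lt, div_lt_iff₀ hN0]
      have : 6 * (2 * Real.log 2 * (1 / N)) * N = 12 * Real.log 2 := by
        field_simp; ring
      rw [this]; linarith
    have hgpos : 0 < gSeq N := by rw [hg]; linarith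
    have : 0 < (N / 4) * gSeq N := by positivity
    nlinarith [this]
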